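/- arXiv:cs/0003049 — 5 statements merged into one kernel-verified Lean document; each statement's English description precedes it below -/
import Mathlib

section
/- Let ⟨D,P⟩ be a planning domain and G a goal. If Δ is a weak plan for G in D and there is no set A of t-propositions on which Δ is conditional, then Δ is a safe plan for G in D. -/
/-- A fluent literal: a fluent constant or its negation. -/
inductive FluentLit (F : Type) where
  | pos (f : F)
  | neg (f : F)

/-- A domain description: t-propositions `L holds-at T`, h-propositions
`A happens-at T`, and c-propositions `A initiates/terminates F when C`. -/
structure Domain (F A T : Type) where
  tprops : Set (FluentLit F × T)
  hprops : Set (A × T)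
  initiates : Set (A × F × Set (FluentLit F))
  terminates : Set (A × F × Set (FluentLit F))

variable {F A T : Type}

/-- An interpretation `H` satisfies a set `C` of fluent literals at time `t`. -/
def satisfiesAt (H : F → T → Bool) (C : Set (FluentLit F)) (t : T) : Prop :=
  (∀ f, FluentLit.pos f ∈ C → H f t = true) ∧
  (∀ f, FluentLit.neg f ∈ C → H f t = false)

/-- `t` is an initiation-point for `f` in `H` relative to `D`. -/
def InitPoint (D : Domain F A T) (H : F → T → Bool) (f : F) (t : T) : Prop :=
  ∃ a C, (a, t) ∈ D.hprops ∧ (a, f, C) ∈ D.initiates ∧ satisfiesAt H C t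

/-- `t` is a termination-point for `f` in `H` relative to `D`. -/
def TermPoint (D : Domain F A T) (H : F → T → Bool) (f : F) (t : T) : Prop :=
  ∃ a C, (a, t) ∈ D.hprops ∧ (a, f, C) ∈ D.terminates ∧ satisfiesAt H C t

/-- A fluent literal holds in an interpretation at a time-point. -/
def holdsLit (H : F → T → Bool) : FluentLit F → T → Prop
  | .pos f, t => H f t = true
  | .neg f, t => H f t = false

/-- `H` is a model of the domain description `D` (clauses (1)-(4)). -/
def Model [LinearOrder T] (D : Domain F A T) (H : F → T → Bool) : Prop :=
  (∀ f (t1 t3 : T), t1 < t3 →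
    (¬ ∃ t2, (InitPoint D H f t2 ∨ TermPoint D H f t2) ∧ t1 ≤ t2 ∧ t2 < t3) →
    H f t1 = H f t3) ∧
  (∀ f (t1 t3 : T), t1 < t3 → InitPoint D H f t1 →
    (¬ ∃ t2, TermPoint D H f t2 ∧ t1 < t2 ∧ t2 < t3) → H f t3 = true) ∧
  (∀ f (t1 t3 : T), t1 < t3 → TermPoint D H f t1 →
    (¬ ∃ t2, InitPoint D H f t2 ∧ t1 < t2 ∧ t2 < t3) → H f t3 = false) ∧
  (∀ L t, (L, t) ∈ D.tprops → holdsLit H L t)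

/-- `D` is consistent iff it has a model. -/
def Consistent [LinearOrder T] (D : Domain F A T) : Prop := ∃ H, Model D H

/-- `D` entails the t-proposition `L holds-at t`. -/
def Entails [LinearOrder T] (D : Domain F A T) (L : FluentLit F) (t : T) : Prop :=
  ∀ H, Model D H → holdsLit H L t

/-- `D ∪ Δ` for a set `Δ` of h-propositions. -/
def addH (D : Domain F A T) (Δ : Set (A × T)) : Domain F A T :=
  { D with hprops := D.hprops ∪ Δ }

/-- `D ∪ A` for a set `A` of t-propositions. -/
def addT (D : Domain F A T) (As : Set (FluentLit F × T)) : Domain F A T :=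
  { D with tprops := D.tprops ∪ As }

/-- `D ⊨ P`: `D` satisfies the set `P` of p-propositions `A needs C`. -/
def SatisfiesP [LinearOrder T] (D : Domain F A T)
    (P : Set (A × Set (FluentLit F))) : Prop :=
  ∀ a C, (a, C) ∈ P → ∀ t : T, (a, t) ∈ D.hprops → ∀ L ∈ C, Entails D L t

/-- `Δ` is a safe plan for the goal `G` in the planning domain `⟨D,P⟩`. -/
def SafePlan [LinearOrder T] (D : Domain F A T) (P : Set (A × Set (FluentLit F)))
    (G : Set (FluentLit F × T)) (Δ : Set (A × T)) : Prop :=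
  Consistent (addH D Δ) ∧ (∀ L t, (L, t) ∈ G → Entails (addH D Δ) L t) ∧
  SatisfiesP (addH D Δ) P

/-- `Δ` is a weak plan for the goal `G` in the planning domain `⟨D,P⟩`. -/
def WeakPlan [LinearOrder T] (D : Domain F A T) (P : Set (A × Set (FluentLit F)))
    (G : Set (FluentLit F × T)) (Δ : Set (A × T)) : Prop :=
  ∃ M, Model (addH D Δ) M ∧ (∀ L t, (L, t) ∈ G → holdsLit M L t) ∧
    ∀ a C, (a, C) ∈ P → ∀ t : T, (a, t) ∈ (addH D Δ).hprops → satisfiesAt M C t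

/-- The weak plan `Δ` is conditional on the set `As` of assumptions (t-propositions). -/
def ConditionalOn [LinearOrder T] (D : Domain F A T) (P : Set (A × Set (FluentLit F)))
    (G : Set (FluentLit F × T)) (Δ : Set (A × T)) (As : Set (FluentLit F × T)) : Prop :=
  ¬ SafePlan D P G Δ ∧ SafePlan (addT D As) P G Δ

/-- a weak plan which is conditional on no set of assumptions
(t-propositions) is a safe plan. -/
theorem weakPlan_not_conditional_is_safePlan {F A T : Type} [LinearOrder T]
    (D : Domain F A T) (P : Set (A × Set (FluentLit F)))
    (hP : ∀ a C, (a, C) ∈ P → C.Nonempty)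
    (G : Set (FluentLit F × T)) (Δ : Set (A × T))
    (hweak : WeakPlan D P G Δ)
    (hnc : ¬ ∃ As : Set (FluentLit F × T), ConditionalOn D P G Δ As) :
    SafePlan D P G Δ := by
  obtain ⟨M, hM, hG, hPC⟩ := hweak
  by_contra hns
  apply hnc
  set As : Set (FluentLit F × T) := {p | holdsLit M p.1 p.2} with hAs
  refine ⟨As, hns, ?_⟩
  -- every model of addH (addT D As) Δ equals M
  have hMmodel : Model (addH (addT D As) Δ) M := by
    obtain ⟨h1, h2, h3, h4⟩ := hM
    refine ⟨h1, h2, h3, ?_⟩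
    rintro L t (h | h)
    · exact h4 L t h
    · exact h
  have huniq : ∀ H, Model (addH (addT D As) Δ) H → H = M := by
    intro H hH
    funext f t
    rcases hbool : M f t with _ | _
    · have : ((FluentLit.neg f, t) : FluentLit F × T) ∈ (addH (addT D As) Δ).tprops :=
        Or.inr (by simpa [hAs, holdsLit] using hbool)
      exact hH.2.2.2 _ t this
    · have : ((FluentLit.pos f, t) : FluentLit F × T) ∈ (addH (addT D As) Δ).tprops :=
        Or.inr (by simpa [hAs, holdsLit] using hbool)
      exact hH.2.2.2 _ t this
  refine ⟨⟨M, hMmodel⟩, ?_, ?_⟩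
  · intro L t hLt H hH
    rw [huniq H hH]
    exact hG L t hLt
  · intro a C haC t hat L hL H hH
    rw [huniq H hH]
    have hsat := hPC a C haC t hat
    cases L with
    | pos f => exact hsat.1 f hL
    | neg f => exact hsat.2 f hL
end

section
/- Let T1, T_f be integer time-points with 1 ≺ T1 ≺ T_f, and let G = {'Running holds-at T_f'}. Then Δ1 = {'TurnOn happens-at T1'} is a safe plan for G in the planning domain ⟨D_c', P_c⟩. -/
variable {F A T : Type}

/-- Fluent constants of the car-engine planning domain. -/
inductive CFluent where
  | Running
  | Petrol

/-- Action constants of the car-engine planning domain. -/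
inductive CAction where
  | TurnOn
  | Empty
  | Fill

/-- The car-engine domain `D_c'`: `TurnOn initiates Running when {Petrol}`,
`Empty terminates Petrol`, `Petrol holds-at 1`, `Fill initiates Petrol`,
`¬Running holds-at 1`. -/
def Dcp : Domain CFluent CAction ℤ where
  tprops := {(.pos .Petrol, 1), (.neg .Running, 1)}
  hprops := ∅
  initiates := {(.TurnOn, .Running, {.pos .Petrol}), (.Fill, .Petrol, (∅ : Set (FluentLit CFluent)))}
  terminates := {(.Empty, .Petrol, (∅ : Set (FluentLit CFluent)))}

/-- The set of p-propositions `P_c = {Fill needs {¬Running}}`. -/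
def Pc : Set (CAction × Set (FluentLit CFluent)) :=
  {(.Fill, {.neg .Running})}

section Aux
variable (T1 Tf : ℤ)

private def D1 (T1 : ℤ) : Domain CFluent CAction ℤ :=
  addH Dcp {(.TurnOn, T1)}

private lemma noTerm (T1 : ℤ) (H : CFluent → ℤ → Bool) (f : CFluent) (t : ℤ) :
    ¬ TermPoint (D1 T1) H f t := by
  rintro ⟨a, C, ha, hc, _⟩
  simp [D1, Dcp, addH, Prod.ext_iff] at ha hc
  obtain ⟨rfl, rfl⟩ := ha
  exact absurd hc.1 (by simp)

private lemma initChar (T1 : ℤ) (H : CFluent → ℤ → Bool) (f : CFluent) (t : ℤ)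
    (h : InitPoint (D1 T1) H f t) :
    f = .Running ∧ t = T1 ∧ H .Petrol T1 = true := by
  obtain ⟨a, C, ha, hc, hs⟩ := h
  simp [D1, Dcp, addH, Prod.ext_iff] at ha hc
  obtain ⟨rfl, rfl⟩ := ha
  rcases hc with ⟨_, rfl, rfl⟩ | ⟨h', _⟩
  · refine ⟨rfl, rfl, hs.1 _ (by simp)⟩
  · exact absurd h' (by simp)

private lemma initRun (T1 : ℤ) (H : CFluent → ℤ → Bool) (hp : H .Petrol T1 = true) :
    InitPoint (D1 T1) H .Running T1 := by
  refine ⟨.TurnOn, {.pos .Petrol}, ?_, ?_, ?_, ?_⟩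
  · simp [D1, Dcp, addH]
  · simp [D1, Dcp, addH]
  · intro f hf; simp at hf; subst hf; exact hp
  · intro f hf; simp at hf

private lemma petrol_true (T1 : ℤ) (h1 : 1 < T1) (H : CFluent → ℤ → Bool)
    (hM : Model (D1 T1) H) : H .Petrol T1 = true := by
  have h4 := hM.2.2.2 (.pos .Petrol) 1 (by simp [D1, Dcp, addH])
  have := hM.1 .Petrol 1 T1 h1 ?_
  · rw [← this]; exact h4
  · rintro ⟨t2, h, _⟩
    rcases h with h | h
    · exact absurd (initChar T1 H _ _ h).1 (by simp)
    · exact noTerm T1 H _ _ h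

end Aux

/-- for `1 ≺ T1 ≺ T_f`, `Δ1 = {TurnOn happens-at T1}` is a safe plan
for `G = {Running holds-at T_f}` in `⟨D_c',P_c⟩`. -/

theorem turnOn_safePlan_Dcp (T1 Tf : ℤ) (h1 : 1 < T1) (h2 : T1 < Tf) :
    SafePlan Dcp Pc {(.pos .Running, Tf)} {(.TurnOn, T1)} := by
  have key : ∀ H, Model (D1 T1) H → H .Running Tf = true := by
    intro H hM
    have hp := petrol_true T1 h1 H hM
    refine hM.2.1 .Running T1 Tf h2 (initRun T1 H hp) ?_
    rintro ⟨t2, h, _⟩; exact noTerm T1 H _ _ h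
  refine ⟨?_, ?_, ?_⟩
  · -- Consistent
    refine ⟨fun f t => match f with | .Petrol => true | .Running => decide (T1 < t), ?_, ?_, ?_, ?_⟩
    · intro f t1 t3 hlt hno
      cases f with
      | Petrol => rfl
      | Running =>
        simp only [decide_eq_decide]
        constructor
        · intro h; omega
        · intro h
          by_contra hc
          exact hno ⟨T1, Or.inl (initRun T1 _ rfl), by omega, by omega⟩
    · intro f t1 t3 hlt hI _
      obtain ⟨rfl, rfl, _⟩ := initChar T1 _ _ _ hI
      simp; omega
    · intro f t1 t3 _ hT _
      exact absurd hT (noTerm T1 _ _ _)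
    · intro L t hL
      simp [D1, Dcp, addH, Prod.ext_iff] at hL
      rcases hL with ⟨rfl, rfl⟩ | ⟨rfl, rfl⟩
      · rfl
      · simp [holdsLit]; omega
  · rintro L t hL
    simp [Prod.ext_iff] at hL
    obtain ⟨rfl, rfl⟩ := hL
    intro H hM
    exact key H hM
  · rintro a C hP t ht L hL
    simp [Pc, Prod.ext_iff] at hP
    obtain ⟨rfl, rfl⟩ := hP
    simp [addH, Dcp, Prod.ext_iff] at ht
end

section
/- Let T1, T_f be integer time-points with 1 ≺ T1 ≺ T_f, and let G = {'Running holds-at T_f'}. Then the weak plan Δ1 = {'TurnOn happens-at T1'} is conditional on the set of assumptions A = {'Petrol holds-at T1'} in the planning domain ⟨D_c'', P_c⟩: Δ1 is not a safe plan for G in D_c'', but Δ1 is a safe plan for G in D_c'' ∪ A. -/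
variable {F A T : Type}

/-- The car-engine domain `D_c''` (no information about `Petrol`):
`TurnOn initiates Running when {Petrol}`, `Empty terminates Petrol`,
`Fill initiates Petrol`, `¬Running holds-at 1`. -/
def Dcpp : Domain CFluent CAction ℤ where
  tprops := {(.neg .Running, 1)}
  hprops := ∅
  initiates := {(.TurnOn, .Running, {.pos .Petrol}), (.Fill, .Petrol, (∅ : Set (FluentLit CFluent)))}
  terminates := {(.Empty, .Petrol, (∅ : Set (FluentLit CFluent)))}

lemma noTerm_s9 {D : Domain CFluent CAction ℤ} {T1 : ℤ}
    (hh : D.hprops = {(CAction.TurnOn, T1)})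
    (ht : D.terminates = Dcpp.terminates)
    (H : CFluent → ℤ → Bool) (f : CFluent) (t : ℤ) :
    ¬ TermPoint D H f t := by
  rintro ⟨a, C, ha, hc, -⟩
  rw [hh] at ha
  rw [ht] at hc
  simp [Dcpp] at ha hc
  obtain ⟨rfl, -⟩ := ha
  simp at hc

lemma initPoint_iff {D : Domain CFluent CAction ℤ} {T1 : ℤ}
    (hh : D.hprops = {(CAction.TurnOn, T1)})
    (hi : D.initiates = Dcpp.initiates)
    (H : CFluent → ℤ → Bool) (f : CFluent) (t : ℤ) :
    InitPoint D H f t ↔ (f = .Running ∧ t = T1 ∧ H .Petrol T1 = true) := by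
  constructor
  · rintro ⟨a, C, ha, hc, hs⟩
    rw [hh] at ha
    rw [hi] at hc
    simp [Dcpp] at ha hc
    obtain ⟨rfl, rfl⟩ := ha
    rcases hc with ⟨-, rfl, rfl⟩ | ⟨hbad, -⟩
    · exact ⟨rfl, rfl, hs.1 _ (by simp)⟩
    · simp at hbad
  · rintro ⟨rfl, rfl, hP⟩
    refine ⟨.TurnOn, {.pos .Petrol}, by rw [hh]; rfl, by rw [hi]; simp [Dcpp],
      fun f hf => by simp at hf; subst hf; exact hP, fun f hf => by simp at hf⟩

/-- for `1 ≺ T1 ≺ T_f`, the weak plan `Δ1 = {TurnOn happens-at T1}`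
is conditional on `A = {Petrol holds-at T1}` in `⟨D_c'',P_c⟩`: `Δ1` is not a safe
plan for `G = {Running holds-at T_f}` in `D_c''`, but it is in `D_c'' ∪ A`. -/
theorem turnOn_conditional_Dcpp (T1 Tf : ℤ) (h1 : 1 < T1) (h2 : T1 < Tf) :
    ConditionalOn Dcpp Pc {(.pos .Running, Tf)} {(.TurnOn, T1)}
      {(.pos .Petrol, T1)} := by
  have hh1 : (addH Dcpp {(CAction.TurnOn, T1)}).hprops = {(CAction.TurnOn, T1)} := by
    simp [addH, Dcpp]
  have hi1 : (addH Dcpp {(CAction.TurnOn, T1)}).initiates = Dcpp.initiates := rfl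
  have ht1 : (addH Dcpp {(CAction.TurnOn, T1)}).terminates = Dcpp.terminates := rfl
  have hh2 : (addH (addT Dcpp {(.pos .Petrol, T1)}) {(CAction.TurnOn, T1)}).hprops
      = {(CAction.TurnOn, T1)} := by simp [addH, addT, Dcpp]
  have hi2 : (addH (addT Dcpp {(.pos .Petrol, T1)}) {(CAction.TurnOn, T1)}).initiates
      = Dcpp.initiates := rfl
  have ht2 : (addH (addT Dcpp {(.pos .Petrol, T1)}) {(CAction.TurnOn, T1)}).terminates
      = Dcpp.terminates := rfl
  constructor
  · rintro ⟨-, hG, -⟩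
    have hmodel : Model (addH Dcpp {(CAction.TurnOn, T1)}) (fun _ _ => false) := by
      refine ⟨?_, ?_, ?_, ?_⟩
      · intro f t1 t3 _ _; rfl
      · intro f t1 t3 _ hinit _
        rw [initPoint_iff hh1 hi1] at hinit
        simp at hinit
      · intro f t1 t3 _ hterm _
        exact absurd hterm (noTerm_s9 hh1 ht1 _ _ _)
      · intro L t hL
        simp [addH, Dcpp] at hL
        obtain ⟨rfl, rfl⟩ := hL
        rfl
    have := hG (.pos .Running) Tf rfl _ hmodel
    simp [holdsLit] at this
  · set M : CFluent → ℤ → Bool := fun f t =>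
      match f with
      | .Petrol => true
      | .Running => decide (T1 < t) with hM
    have hMP : ∀ t, M CFluent.Petrol t = true := fun _ => rfl
    have hMR : ∀ t, M CFluent.Running t = decide (T1 < t) := fun _ => rfl
    have hmodel : Model (addH (addT Dcpp {(.pos .Petrol, T1)}) {(CAction.TurnOn, T1)}) M := by
      refine ⟨?_, ?_, ?_, ?_⟩
      · intro f t1 t3 hlt hno
        cases f with
        | Petrol => rfl
        | Running =>
          rw [hMR, hMR]
          by_cases hc : T1 < t1
          · have : T1 < t3 := lt_trans hc hlt
            simp [hc, this]
          · have ht3 : ¬ T1 < t3 := by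
              intro h3
              exact hno ⟨T1, Or.inl ((initPoint_iff hh2 hi2 M _ _).2 ⟨rfl, rfl, rfl⟩),
                le_of_not_gt hc, h3⟩
            simp [hc, ht3]
      · intro f t1 t3 hlt hinit _
        rw [initPoint_iff hh2 hi2] at hinit
        obtain ⟨rfl, rfl, -⟩ := hinit
        rw [hMR]
        simpa using hlt
      · intro f t1 t3 _ hterm _
        exact absurd hterm (noTerm_s9 hh2 ht2 _ _ _)
      · intro L t hL
        simp [addH, addT, Dcpp] at hL
        rcases hL with ⟨rfl, rfl⟩ | ⟨rfl, rfl⟩ <;>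
          simp [holdsLit, hMR, hMP] <;> omega
    refine ⟨⟨M, hmodel⟩, ?_, ?_⟩
    · intro L t hLt H hH
      have hLt' : L = .pos .Running ∧ t = Tf := by
        simpa [Prod.ext_iff] using hLt
      obtain ⟨hL1, hL2⟩ := hLt'
      subst hL1; subst hL2
      have hP : H CFluent.Petrol T1 = true := by
        have := hH.2.2.2 (.pos .Petrol) T1 (by simp [addH, addT, Dcpp])
        exact this
      have hinit : InitPoint (addH (addT Dcpp {(.pos .Petrol, T1)}) {(CAction.TurnOn, T1)})
          H CFluent.Running T1 := (initPoint_iff hh2 hi2 H _ _).2 ⟨rfl, rfl, hP⟩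
      exact hH.2.1 CFluent.Running T1 t h2 hinit
        (fun ⟨t2, hterm, _, _⟩ => noTerm_s9 hh2 ht2 H _ t2 hterm)
    · intro a C hPC t hat
      rw [hh2] at hat
      simp [Pc] at hPC hat
      obtain ⟨rfl, -⟩ := hPC
      simp at hat
end

section
/- Let T2, T1 be integer time-points with T2 ≺ T1, and let Δ2 = {'TurnOn happens-at T1', 'Fill happens-at T2'}. Then D_c'' ∪ Δ2 entails the t-proposition 'Petrol holds-at T1', i.e. every model H of D_c'' ∪ Δ2 satisfies H(Petrol,T1)=true. -/
variable {F A T : Type}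

/-- for `T2 ≺ T1`, `D_c'' ∪ Δ2` with
`Δ2 = {TurnOn happens-at T1, Fill happens-at T2}` entails `Petrol holds-at T1`:
every model `H` of `D_c'' ∪ Δ2` satisfies `H(Petrol,T1) = true`. -/
theorem Dcpp_delta2_entails_Petrol (T2 T1 : ℤ) (h : T2 < T1) :
    ∀ H : CFluent → ℤ → Bool,
      Model (addH Dcpp {(.TurnOn, T1), (.Fill, T2)}) H → H .Petrol T1 = true := by
  intro H hM
  obtain ⟨_, h2, _, _⟩ := hM
  apply h2 .Petrol T2 T1 h
  · exact ⟨.Fill, ∅, Or.inr (Or.inr rfl),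
      Or.inr rfl, fun f hf => hf.elim, fun f hf => hf.elim⟩
  · rintro ⟨t, ⟨a, C, ha, hter, _⟩, _, _⟩
    simp only [addH, Dcpp, Set.mem_union, Set.mem_empty_iff_false, false_or,
      Set.mem_insert_iff, Set.mem_singleton_iff, Prod.mk.injEq] at ha hter
    obtain ⟨rfl, _, _⟩ := hter
    rcases ha with ⟨h1,_⟩|⟨h1,_⟩ <;> exact CAction.noConfusion h1
end

section
/- Let T1, T2, T_f be integer time-points with T1 ≺ T_f and T2 ≺ T_f, and let G = {'Protected holds-at T_f'}. Then Δ = {'InjectA happens-at T1', 'InjectB happens-at T2'} is a safe plan for G in the planning domain ⟨D_v, ∅⟩, even though the truth value of the fluent TypeO is not determined by D_v. -/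
variable {F A T : Type}

/-- Fluent constants of the vaccine domain. -/
inductive VFluent where
  | Protected
  | TypeO

/-- Action constants of the vaccine domain. -/
inductive VAction where
  | InjectA
  | InjectB

/-- The vaccine domain `D_v`: `InjectA initiates Protected when {TypeO}`,
`InjectB initiates Protected when {¬TypeO}`. -/
def Dv : Domain VFluent VAction ℤ where
  tprops := ∅
  hprops := ∅
  initiates := {(.InjectA, .Protected, {.pos .TypeO}),
                (.InjectB, .Protected, {.neg .TypeO})}
  terminates := ∅

lemma constModelDv (b : VFluent → Bool) : Model Dv (fun f _ => b f) := by
  refine ⟨fun f t1 t3 _ _ => rfl, ?_, ?_, ?_⟩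
  · rintro f t1 t3 _ ⟨a, C, h, _⟩ _; exact h.elim
  · rintro f t1 t3 _ ⟨a, C, h, _⟩ _; exact h.elim
  · rintro L t h; exact h.elim

section
variable (T1 T2 : ℤ)

local notation "D'" => addH Dv {(VAction.InjectA, T1), (VAction.InjectB, T2)}

lemma noTermD' (H : VFluent → ℤ → Bool) (f : VFluent) (t : ℤ) :
    ¬ TermPoint D' H f t := by
  rintro ⟨a, C, _, h, _⟩; exact h.elim

lemma initD'_iff (H : VFluent → ℤ → Bool) (f : VFluent) (t : ℤ) :
    InitPoint D' H f t ↔ f = .Protected ∧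
      ((t = T1 ∧ H .TypeO T1 = true) ∨ (t = T2 ∧ H .TypeO T2 = false)) := by
  constructor
  · rintro ⟨a, C, hh, hi, hs⟩
    simp only [addH, Dv, Set.mem_union, Set.mem_insert_iff, Set.mem_singleton_iff,
      Prod.mk.injEq] at hh hi
    rcases hi with ⟨ha, hf, hC⟩ | ⟨ha, hf, hC⟩
    · subst ha hf hC
      rcases hh with h | ⟨_, ht⟩ | ⟨h, _⟩
      · exact h.elim
      · subst ht
        exact ⟨rfl, Or.inl ⟨rfl, hs.1 _ rfl⟩⟩
      · exact absurd h (by simp)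
    · subst ha hf hC
      rcases hh with h | ⟨h, _⟩ | ⟨_, ht⟩
      · exact h.elim
      · exact absurd h (by simp)
      · subst ht
        exact ⟨rfl, Or.inr ⟨rfl, hs.2 _ rfl⟩⟩
  · rintro ⟨hf, ⟨ht, hb⟩ | ⟨ht, hb⟩⟩ <;> subst hf <;> subst ht
    · exact ⟨.InjectA, {.pos .TypeO}, Or.inr (Or.inl rfl), Or.inl rfl,
        ⟨by rintro f hf; cases hf; exact hb, by rintro f hf; cases hf⟩⟩
    · refine ⟨.InjectB, {.neg .TypeO}, Or.inr (Or.inr rfl), ?_, ?_, ?_⟩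
      · right; exact Set.mem_singleton _
      · rintro f hf; cases hf
      · rintro f hf; cases hf; exact hb

lemma typeO_const (M : VFluent → ℤ → Bool) (hM : Model D' M) (t t' : ℤ) :
    M .TypeO t = M .TypeO t' := by
  have key : ∀ s s' : ℤ, s < s' → M .TypeO s = M .TypeO s' := by
    intro s s' hss
    refine hM.1 _ s s' hss ?_
    rintro ⟨u, hu | hu, _⟩
    · rw [initD'_iff] at hu; exact absurd hu.1 (by simp)
    · exact noTermD' _ _ _ _ _ hu
  rcases lt_trichotomy t t' with h | h | h
  · exact key _ _ h
  · rw [h]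
  · exact (key _ _ h).symm
end

/-- for `T1 ≺ T_f` and `T2 ≺ T_f`,
`Δ = {InjectA happens-at T1, InjectB happens-at T2}` is a safe plan for
`G = {Protected holds-at T_f}` in `⟨D_v,∅⟩`, even though the truth value of
`TypeO` is not determined by `D_v`. -/
theorem injectA_injectB_safePlan_Dv (T1 T2 Tf : ℤ) (h1 : T1 < Tf) (h2 : T2 < Tf) :
    (∀ t : ℤ, ¬ Entails Dv (.pos .TypeO) t ∧ ¬ Entails Dv (.neg .TypeO) t) ∧
    SafePlan Dv (∅ : Set (VAction × Set (FluentLit VFluent)))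
      {(.pos .Protected, Tf)} {(.InjectA, T1), (.InjectB, T2)} := by
  constructor
  · intro t
    constructor
    · intro h
      have := h (fun _ _ => false) (constModelDv _)
      simp [holdsLit] at this
    · intro h
      have := h (fun _ _ => true) (constModelDv _)
      simp [holdsLit] at this
  · refine ⟨?_, ?_, ?_⟩
    · refine ⟨fun f t => match f with
        | .TypeO => true
        | .Protected => decide (T1 < t), ?_, ?_, ?_, ?_⟩
      · intro f t1 t3 h13 hno
        cases f
        · simp only
          by_cases hA : T1 < t1
          · simp [hA, lt_trans hA h13]
          · by_cases hB : T1 < t3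
            · exact absurd ⟨T1, Or.inl ((initD'_iff T1 T2 _ _ _).2
                ⟨rfl, Or.inl ⟨rfl, rfl⟩⟩), le_of_not_gt hA, hB⟩ hno
            · simp [hA, hB]
        · rfl
      · intro f t1 t3 h13 hinit _
        rw [initD'_iff] at hinit
        obtain ⟨hf, h⟩ := hinit
        subst hf
        rcases h with ⟨ht, _⟩ | ⟨_, hb⟩
        · subst ht; simp [h13]
        · simp at hb
      · intro f t1 t3 _ hterm _
        exact absurd hterm (noTermD' _ _ _ _ _)
      · rintro L t h; exact h.elim
    · rintro L t h
      simp only [Set.mem_singleton_iff, Prod.mk.injEq] at h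
      obtain ⟨rfl, rfl⟩ := h
      intro M hM
      show M .Protected t = true
      rcases hb : M .TypeO T1 with _ | _
      · have hb2 : M .TypeO T2 = false := (typeO_const T1 T2 M hM T2 T1).trans hb
        exact hM.2.1 _ T2 t h2 ((initD'_iff T1 T2 _ _ _).2 ⟨rfl, Or.inr ⟨rfl, hb2⟩⟩)
          (by rintro ⟨u, hu, _⟩; exact noTermD' _ _ _ _ _ hu)
      · exact hM.2.1 _ T1 t h1 ((initD'_iff T1 T2 _ _ _).2 ⟨rfl, Or.inl ⟨rfl, hb⟩⟩)
          (by rintro ⟨u, hu, _⟩; exact noTermD' _ _ _ _ _ hu)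
    · rintro a C h; exact h.elim
end
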